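/- arXiv:1208.2566 — 5 statements merged into one kernel-verified Lean document; each statement's English description precedes it below -/
import Mathlib

section
/- Given a finite set S, a collection C of subsets of S, and the SAS+ instance with one Boolean variable v_c per set c ∈ C (all initially 0, all goal values 1) and one action a_e per element e ∈ S that has no preconditions and sets v_c to 1 for every c containing e, there exists a plan of length at most k if and only if there exists a hitting set H ⊆ S with |H| ≤ k (i.e., H ∩ c ≠ ∅ for every c ∈ C). -/
/-- A SAS+ action: a partial precondition and a partial effect. -/
structure SASAction (V D : Type) where
  pre : V → Option D
  eff : V → Option D

/-- The result of applying an action to a total state. -/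
def applyAct {V D : Type} (a : SASAction V D) (s : V → D) : V → D :=
  fun v => (a.eff v).getD (s v)

/-- An action is valid in a state if its precondition agrees with the state. -/
def validIn {V D : Type} (a : SASAction V D) (s : V → D) : Prop :=
  ∀ v x, a.pre v = some x → s v = x

/-- `isPlanFrom π s t` : the sequence `π` is a plan from state `s` to state `t`. -/
def isPlanFrom {V D : Type} : List (SASAction V D) → (V → D) → (V → D) → Prop
  | [], s, t => t = s
  | a :: π, s, t => validIn a s ∧ isPlanFrom π (applyAct a s) t

/-- The state resulting from applying a sequence of actions. -/
def runPlan {V D : Type} (π : List (SASAction V D)) (s : V → D) : V → D :=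
  π.foldl (fun s a => applyAct a s) s

/-- A total state satisfies a partial state wherever the latter is defined. -/
def satisfies {V D : Type} (goal : V → Option D) (s : V → D) : Prop :=
  ∀ v x, goal v = some x → s v = x

/-- The action `a_e` of the hitting-set reduction: no preconditions, sets `v_c := 1`
    for every `c ∈ C` with `e ∈ c`. -/
def hittingAct {α : Type} [DecidableEq α] (C : Finset (Finset α)) (e : α) :
    SASAction {c // c ∈ C} Bool :=
  ⟨fun _ => none, fun c => if e ∈ c.1 then some true else none⟩

lemma hitting_isPlanFrom {α : Type} [DecidableEq α] (C : Finset (Finset α)) :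
    ∀ (l : List α) (s t : {c // c ∈ C} → Bool),
      isPlanFrom (l.map (hittingAct C)) s t ↔ t = runPlan (l.map (hittingAct C)) s := by
  intro l
  induction l with
  | nil => intro s t; simp [isPlanFrom, runPlan]
  | cons e l ih =>
    intro s t
    simp only [List.map_cons, isPlanFrom, runPlan, List.foldl_cons]
    constructor
    · rintro ⟨_, h⟩; exact (ih _ t).mp h
    · intro h
      refine ⟨fun v x hx => by simp [hittingAct] at hx, (ih _ t).mpr h⟩

lemma hitting_run {α : Type} [DecidableEq α] (C : Finset (Finset α)) :
    ∀ (l : List α) (s : {c // c ∈ C} → Bool) (c : {c // c ∈ C}),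
      runPlan (l.map (hittingAct C)) s c = true ↔ s c = true ∨ ∃ e ∈ l, e ∈ c.1 := by
  intro l
  induction l with
  | nil => intro s c; simp [runPlan]
  | cons e l ih =>
    intro s c
    simp only [List.map_cons, runPlan, List.foldl_cons] at *
    rw [ih]
    by_cases he : e ∈ c.1 <;> simp [applyAct, hittingAct, he] <;> tauto

theorem hitting_set_reduction_correct {α : Type} [DecidableEq α]
    (S : Finset α) (C : Finset (Finset α)) (k : ℕ) :
    (∃ l : List α, (∀ e ∈ l, e ∈ S) ∧ l.length ≤ k ∧
        ∃ t : {c // c ∈ C} → Bool,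
          isPlanFrom (l.map (hittingAct C)) (fun _ => false) t ∧ ∀ c, t c = true) ↔
      ∃ H : Finset α, H ⊆ S ∧ H.card ≤ k ∧ ∀ c ∈ C, (H ∩ c).Nonempty := by
  constructor
  · rintro ⟨l, hlS, hlen, t, hplan, hgoal⟩
    refine ⟨l.toFinset, ?_, le_trans l.toFinset_card_le hlen, ?_⟩
    · intro e he; exact hlS e (List.mem_toFinset.mp he)
    · intro c hc
      have := hgoal ⟨c, hc⟩
      rw [(hitting_isPlanFrom C l _ t).mp hplan] at this
      rcases (hitting_run C l _ ⟨c, hc⟩).mp this with h | ⟨e, he, hec⟩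
      · simp at h
      · exact ⟨e, Finset.mem_inter.mpr ⟨List.mem_toFinset.mpr he, hec⟩⟩
  · rintro ⟨H, hHS, hcard, hhit⟩
    refine ⟨H.toList, fun e he => hHS (Finset.mem_toList.mp he), by simp [hcard], _,
      (hitting_isPlanFrom C _ _ _).mpr rfl, ?_⟩
    intro c
    rw [hitting_run]
    obtain ⟨e, he⟩ := hhit c.1 c.2
    rw [Finset.mem_inter] at he
    exact Or.inr ⟨e, Finset.mem_toList.mpr he.1, he.2⟩
end

section
/- In the hitting-set-to-planning reduction, if a sequence of actions (a_{e_1}, …, a_{e_k}) applied from the all-zero state reaches a state where every variable v_c equals 1, then the set {e_1, …, e_k} is a hitting set for (S, C). -/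
lemma key {α : Type} [DecidableEq α]
    (C : Finset (Finset α)) (l : List α) (s : {c // c ∈ C} → Bool)
    (t : {c // c ∈ C} → Bool)
    (hplan : isPlanFrom (l.map (hittingAct C)) s t)
    (c : {c // c ∈ C}) (hs : s c = false) (ht : t c = true) :
    ∃ e ∈ l, e ∈ c.1 := by
  induction l generalizing s with
  | nil =>
    simp [isPlanFrom] at hplan
    rw [hplan, hs] at ht; exact absurd ht (by simp)
  | cons e l ih =>
    obtain ⟨_, hrest⟩ := hplan
    by_cases he : e ∈ c.1
    · exact ⟨e, by simp, he⟩
    · obtain ⟨f, hf, hfc⟩ := ih _ hrest (by simp [applyAct, hittingAct, he, hs])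
      exact ⟨f, by simp [hf], hfc⟩

theorem plan_gives_hitting_set {α : Type} [DecidableEq α]
    (C : Finset (Finset α)) (l : List α) (t : {c // c ∈ C} → Bool)
    (hplan : isPlanFrom (l.map (hittingAct C)) (fun _ => false) t)
    (hgoal : ∀ c, t c = true) :
    ∀ c ∈ C, ∃ e ∈ l, e ∈ c := by
  intro c hc
  exact key C l _ t hplan ⟨c, hc⟩ rfl (hgoal _)
end

section
/- In the hitting-set-to-planning reduction, for any subset H ⊆ S, applying the actions {a_e : e ∈ H} in any order starting from the all-zero state results in the state where v_c = 1 if and only if c ∩ H ≠ ∅; consequently any hitting set H of size at most k yields a plan of length at most k. -/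
lemma runPlan_hitting {α : Type} [DecidableEq α] (C : Finset (Finset α)) :
    ∀ (l : List α) (s : {c // c ∈ C} → Bool),
      runPlan (l.map (hittingAct C)) s =
        fun c => if ∃ e ∈ l, e ∈ c.1 then true else s c := by
  intro l
  induction l with
  | nil => intro s; funext c; simp [runPlan]
  | cons a l ih =>
    intro s
    funext c
    rw [show runPlan ((a :: l).map (hittingAct C)) s
        = runPlan (l.map (hittingAct C)) (applyAct (hittingAct C a) s) from rfl, ih]
    simp only [applyAct, hittingAct, List.mem_cons]
    by_cases h1 : ∃ e ∈ l, e ∈ c.1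
    · simp [h1]
    · by_cases h2 : a ∈ c.1 <;> simp [h1, h2]

lemma isPlanFrom_hitting {α : Type} [DecidableEq α] (C : Finset (Finset α)) :
    ∀ (l : List α) (s : {c // c ∈ C} → Bool),
      isPlanFrom (l.map (hittingAct C)) s (runPlan (l.map (hittingAct C)) s) := by
  intro l
  induction l with
  | nil => intro s; simp [isPlanFrom, runPlan]
  | cons a l ih =>
    intro s
    refine ⟨fun v x h => by simp [hittingAct] at h, ih (applyAct (hittingAct C a) s)⟩

theorem hitting_set_gives_plan {α : Type} [DecidableEq α]
    (S : Finset α) (C : Finset (Finset α)) (k : ℕ) (H : Finset α) (hHS : H ⊆ S) :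
    (∀ l : List α, l.toFinset = H →
        runPlan (l.map (hittingAct C)) (fun _ => false) =
          fun c => if (H ∩ c.1).Nonempty then true else false) ∧
    (H.card ≤ k → (∀ c ∈ C, (H ∩ c).Nonempty) →
      ∃ l : List α, (∀ e ∈ l, e ∈ S) ∧ l.length ≤ k ∧
        ∃ t : {c // c ∈ C} → Bool,
          isPlanFrom (l.map (hittingAct C)) (fun _ => false) t ∧ ∀ c, t c = true) := by
  have key : ∀ l : List α, l.toFinset = H →
      runPlan (l.map (hittingAct C)) (fun _ => false) =
        fun c => if (H ∩ c.1).Nonempty then true else false := by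
    intro l hl
    rw [runPlan_hitting]
    funext c
    have : (∃ e ∈ l, e ∈ c.1) ↔ (H ∩ c.1).Nonempty := by
      constructor
      · rintro ⟨e, he, hec⟩
        exact ⟨e, Finset.mem_inter.2 ⟨hl ▸ List.mem_toFinset.2 he, hec⟩⟩
      · rintro ⟨e, he⟩
        rcases Finset.mem_inter.1 he with ⟨h1, h2⟩
        exact ⟨e, List.mem_toFinset.1 (hl ▸ h1), h2⟩
    by_cases h : (H ∩ c.1).Nonempty <;> simp [h, this]
  refine ⟨key, fun hk hhit => ?_⟩
  refine ⟨H.toList, fun e he => hHS (Finset.mem_toList.1 he), by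
    rw [Finset.length_toList]; exact hk, ?_⟩
  refine ⟨runPlan (H.toList.map (hittingAct C)) (fun _ => false),
    isPlanFrom_hitting C _ _, ?_⟩
  intro c
  rw [key H.toList (Finset.toList_toFinset H)]
  simp [hhit c.1 c.2]
end

section
/- In the partitioned-clique-to-planning reduction, if the k-partite graph G (with parts V₁,…,V_k of equal size) has a k-clique {v₁,…,v_k} with v_i ∈ V_i, then the constructed SAS+ instance has a plan of length exactly k + 7·(k choose 2). -/
/-- Variables of the partitioned-clique reduction: edge variables, vertex
    variables, checking variables, and clean-up variables. -/
inductive PCVar (ν : Type) (k : ℕ) : Type where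
  | edge : Sym2 ν → PCVar ν k
  | vert : ν → Fin k → PCVar ν k
  | check : Fin k → Fin k → PCVar ν k
  | cleanup : ν → PCVar ν k
  deriving DecidableEq

/-- Group-1 action `aᵉ` for `e = {u,w}`: sets `x(e) := 1`. -/
def act1 {ν : Type} [DecidableEq ν] {k : ℕ} (u w : ν) : SASAction (PCVar ν k) Bool :=
  ⟨fun _ => none, fun z => if z = PCVar.edge s(u, w) then some true else none⟩

/-- Group-2 action `aᵉᵤ` for `e = {u,w}`: precondition `x(e) = 1`, effect
    `x(u, part w) := 1`. -/
def act2 {ν : Type} [DecidableEq ν] {k : ℕ} (part : ν → Fin k) (u w : ν) :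
    SASAction (PCVar ν k) Bool :=
  ⟨fun z => if z = PCVar.edge s(u, w) then some true else none,
   fun z => if z = PCVar.vert u (part w) then some true else none⟩

/-- Group-3 action `aᵛⱼ`: precondition `x(v,j) = 1`, effect `x(part v, j) := 1`. -/
def act3 {ν : Type} [DecidableEq ν] {k : ℕ} (part : ν → Fin k) (v : ν) (j : Fin k) :
    SASAction (PCVar ν k) Bool :=
  ⟨fun z => if z = PCVar.vert v j then some true else none,
   fun z => if z = PCVar.check (part v) j then some true else none⟩

/-- Group-4 action `aᵥ`: sets the clean-up variable `x(v) := 1`. -/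
def act4 {ν : Type} [DecidableEq ν] {k : ℕ} (v : ν) : SASAction (PCVar ν k) Bool :=
  ⟨fun _ => none, fun z => if z = PCVar.cleanup v then some true else none⟩

/-- Group-5 action `aʲᵥ`: precondition `x(v) = 1`, effect `x(v,j) := 0`. -/
def act5 {ν : Type} [DecidableEq ν] {k : ℕ} (v : ν) (j : Fin k) :
    SASAction (PCVar ν k) Bool :=
  ⟨fun z => if z = PCVar.cleanup v then some true else none,
   fun z => if z = PCVar.vert v j then some false else none⟩

/-- The action set of the partitioned-clique reduction. -/
def PCActions {ν : Type} [DecidableEq ν] {k : ℕ} (adj : ν → ν → Prop)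
    (part : ν → Fin k) : Set (SASAction (PCVar ν k) Bool) :=
  {a | (∃ u w, adj u w ∧ a = act1 u w) ∨
       (∃ u w, adj u w ∧ a = act2 part u w) ∨
       (∃ v j, j ≠ part v ∧ a = act3 part v j) ∨
       (∃ v, a = act4 v) ∨
       (∃ v j, j ≠ part v ∧ a = act5 v j)}

/-- The goal of the partitioned-clique reduction: all checking variables are `1`,
    all vertex variables are `0`, the rest are undefined. -/
def PCGoal {ν : Type} {k : ℕ} (part : ν → Fin k) : PCVar ν k → Option Bool
  | PCVar.check i j => if i ≠ j then some true else none
  | PCVar.vert v j => if j ≠ part v then some false else none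
  | _ => none


/-! The plan for a clique `c` runs along the complete graph on `Fin k`: one `aᵉ` for each of its
`k choose 2` edges `{i, j}` (with `e = {c i, c j}`); for each of its `2 (k choose 2)` darts
`(i, j)`, the action setting `x(c i, j)` and then the one setting the checking variable
`x(i, j)`; `a_{c i}` for each `i`; and finally, for each dart `(i, j)`, the reset of
`x(c i, j)`. Within each phase no action writes a variable that another one reads, so a phase is
executable from any state meeting all its preconditions, and these are set by the phase before.
-/

section Plans

variable {V D : Type}

theorem isPlanFrom_append {π₁ π₂ : List (SASAction V D)} {s m t : V → D}
    (h₁ : isPlanFrom π₁ s m) (h₂ : isPlanFrom π₂ m t) : isPlanFrom (π₁ ++ π₂) s t := by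
  induction π₁ generalizing s with
  | nil => cases (h₁ : m = s); exact h₂
  | cons a π ih => exact ⟨h₁.1, ih h₁.2⟩

theorem runPlan_append (π₁ π₂ : List (SASAction V D)) (s : V → D) :
    runPlan (π₁ ++ π₂) s = runPlan π₂ (runPlan π₁ s) :=
  List.foldl_append

theorem runPlan_apply_of_forall_eff {π : List (SASAction V D)} {v : V} {b : D}
    (h : ∀ a ∈ π, a.eff v = none ∨ a.eff v = some b) {s : V → D} (hs : s v = b) :
    runPlan π s v = b := by
  induction π generalizing s with
  | nil => exact hs
  | cons a π ih =>
    refine ih (fun a' ha' => h a' (List.mem_cons_of_mem _ ha')) ?_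
    rcases h a List.mem_cons_self with ha | ha <;> simp [applyAct, ha, hs]

theorem runPlan_apply_of_forall_eff_eq_none {π : List (SASAction V D)} {v : V}
    (h : ∀ a ∈ π, a.eff v = none) (s : V → D) : runPlan π s v = s v :=
  runPlan_apply_of_forall_eff (fun a ha => Or.inl (h a ha)) rfl

theorem runPlan_apply_of_mem {π : List (SASAction V D)} {v : V} {b : D}
    {a : SASAction V D} (ha : a ∈ π) (hav : a.eff v = some b)
    (h : ∀ a ∈ π, a.eff v = none ∨ a.eff v = some b) (s : V → D) :
    runPlan π s v = b := by
  obtain ⟨π₁, π₂, rfl⟩ := List.append_of_mem ha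
  rw [runPlan_append]
  show runPlan π₂ (applyAct a (runPlan π₁ s)) v = b
  exact runPlan_apply_of_forall_eff (fun a' ha' => h a' (by simp [ha']))
    (by simp only [applyAct, hav, Option.getD_some])

theorem validIn_of_pre_eq [DecidableEq V] {a : SASAction V D} {x : V} {b : D} {s : V → D}
    (hpre : a.pre = fun z => if z = x then some b else none) (hs : s x = b) : validIn a s := by
  intro v y hv
  obtain ⟨rfl, rfl⟩ : v = x ∧ b = y := by simpa [hpre] using hv
  exact hs

theorem ite_eq_none_or_eq_some (p : Prop) [Decidable p] (b : D) :
    (if p then some b else none) = none ∨ (if p then some b else none) = some b := by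
  split_ifs <;> simp

theorem isPlanFrom_runPlan {π : List (SASAction V D)} {s : V → D}
    (hvalid : ∀ a ∈ π, validIn a s)
    (hread : ∀ a ∈ π, ∀ b ∈ π, ∀ v, a.pre v ≠ none → b.eff v = none) :
    isPlanFrom π s (runPlan π s) := by
  induction π generalizing s with
  | nil => rfl
  | cons a π ih =>
    refine ⟨hvalid a List.mem_cons_self, ih (fun b hb v x hpre => ?_) ?_⟩
    · have hav : a.eff v = none :=
        hread b (List.mem_cons_of_mem _ hb) a List.mem_cons_self v (by simp [hpre])
      simpa [applyAct, hav] using hvalid b (List.mem_cons_of_mem _ hb) v x hpre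
    · exact fun a' ha' b' hb' =>
        hread a' (List.mem_cons_of_mem _ ha') b' (List.mem_cons_of_mem _ hb')

theorem isPlanFrom_runPlan_of_pre_eq_none {π : List (SASAction V D)}
    (h : ∀ a ∈ π, a.pre = fun _ => none) (s : V → D) : isPlanFrom π s (runPlan π s) :=
  isPlanFrom_runPlan (fun a ha v x hv => by simp [h a ha] at hv)
    (fun a ha _ _ v hv => absurd (congrFun (h a ha) v) hv)

end Plans

noncomputable section Reduction

variable {ν : Type} [DecidableEq ν] {k : ℕ}

theorem act1_comm (u w : ν) : (act1 u w : SASAction (PCVar ν k) Bool) = act1 w u := by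
  unfold act1
  rw [Sym2.eq_swap]

def edgeAct (e : Sym2 ν) : SASAction (PCVar ν k) Bool :=
  Sym2.lift ⟨act1, act1_comm⟩ e

theorem edgeAct_mk (u w : ν) : (edgeAct s(u, w) : SASAction (PCVar ν k) Bool) = act1 u w :=
  rfl

open SimpleGraph

variable (part : ν → Fin k) (c : Fin k → ν)

def edgePhase : List (SASAction (PCVar ν k) Bool) :=
  (⊤ : SimpleGraph (Fin k)).edgeFinset.toList.map fun e => edgeAct (e.map c)

def vertPhase : List (SASAction (PCVar ν k) Bool) :=
  (Finset.univ : Finset (⊤ : SimpleGraph (Fin k)).Dart).toList.map fun d =>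
    act2 part (c d.fst) (c d.snd)

def checkPhase : List (SASAction (PCVar ν k) Bool) :=
  (Finset.univ : Finset (⊤ : SimpleGraph (Fin k)).Dart).toList.map fun d =>
    act3 part (c d.fst) d.snd

def cleanupPhase : List (SASAction (PCVar ν k) Bool) :=
  (List.finRange k).map fun i => act4 (c i)

def resetPhase : List (SASAction (PCVar ν k) Bool) :=
  (Finset.univ : Finset (⊤ : SimpleGraph (Fin k)).Dart).toList.map fun d =>
    act5 (c d.fst) d.snd

def cliquePlan : List (SASAction (PCVar ν k) Bool) :=
  edgePhase c ++ vertPhase part c ++ checkPhase part c ++ cleanupPhase c ++ resetPhase c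

theorem length_cliquePlan : (cliquePlan part c).length = k + 7 * k.choose 2 := by
  have hdart : Fintype.card (⊤ : SimpleGraph (Fin k)).Dart = 2 * k.choose 2 := by
    rw [dart_card_eq_twice_card_edges, card_edgeFinset_top_eq_card_choose_two, Fintype.card_fin]
  simp only [cliquePlan, edgePhase, vertPhase, checkPhase, cleanupPhase, resetPhase,
    List.length_append, List.length_map, Finset.length_toList, Finset.card_univ, hdart,
    card_edgeFinset_top_eq_card_choose_two, Fintype.card_fin, List.length_finRange]
  ring

theorem runPlan_edgePhase_edge (s : PCVar ν k → Bool) (d : (⊤ : SimpleGraph (Fin k)).Dart) :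
    runPlan (edgePhase c) s (.edge s(c d.fst, c d.snd)) = true := by
  refine runPlan_apply_of_mem (a := act1 (c d.fst) (c d.snd))
    (List.mem_map.mpr ⟨s(d.fst, d.snd), by simp, rfl⟩) (if_pos rfl) ?_ s
  refine List.forall_mem_map.mpr fun e _ => ?_
  induction e using Sym2.ind
  exact ite_eq_none_or_eq_some _ _

theorem runPlan_vertPhase_vert (hc : ∀ i, part (c i) = i) (s : PCVar ν k → Bool)
    (d : (⊤ : SimpleGraph (Fin k)).Dart) :
    runPlan (vertPhase part c) s (.vert (c d.fst) d.snd) = true :=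
  runPlan_apply_of_mem (a := act2 part (c d.fst) (c d.snd))
    (List.mem_map.mpr ⟨d, by simp, rfl⟩) (by simp [act2, hc])
    (List.forall_mem_map.mpr fun _ _ => ite_eq_none_or_eq_some _ _) s

theorem runPlan_cleanupPhase_cleanup (s : PCVar ν k → Bool) (i : Fin k) :
    runPlan (cleanupPhase c) s (.cleanup (c i)) = true :=
  runPlan_apply_of_mem (a := act4 (c i)) (List.mem_map.mpr ⟨i, List.mem_finRange i, rfl⟩)
    (if_pos rfl) (List.forall_mem_map.mpr fun _ _ => ite_eq_none_or_eq_some _ _) s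

theorem isPlanFrom_edgePhase (s : PCVar ν k → Bool) :
    isPlanFrom (edgePhase c) s (runPlan (edgePhase c) s) := by
  refine isPlanFrom_runPlan_of_pre_eq_none (List.forall_mem_map.mpr fun e _ => ?_) s
  induction e using Sym2.ind
  rfl

theorem isPlanFrom_vertPhase {s : PCVar ν k → Bool}
    (hs : ∀ d : (⊤ : SimpleGraph (Fin k)).Dart, s (.edge s(c d.fst, c d.snd)) = true) :
    isPlanFrom (vertPhase part c) s (runPlan (vertPhase part c) s) := by
  refine isPlanFrom_runPlan (List.forall_mem_map.mpr fun d _ => validIn_of_pre_eq rfl (hs d)) ?_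
  simp only [vertPhase, List.forall_mem_map]
  intro d _ d' _ v hv
  simp_all [act2]

theorem isPlanFrom_checkPhase {s : PCVar ν k → Bool}
    (hs : ∀ d : (⊤ : SimpleGraph (Fin k)).Dart, s (.vert (c d.fst) d.snd) = true) :
    isPlanFrom (checkPhase part c) s (runPlan (checkPhase part c) s) := by
  refine isPlanFrom_runPlan (List.forall_mem_map.mpr fun d _ => validIn_of_pre_eq rfl (hs d)) ?_
  simp only [checkPhase, List.forall_mem_map]
  intro d _ d' _ v hv
  simp_all [act3]

theorem isPlanFrom_cleanupPhase (s : PCVar ν k → Bool) :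
    isPlanFrom (cleanupPhase c) s (runPlan (cleanupPhase c) s) :=
  isPlanFrom_runPlan_of_pre_eq_none (List.forall_mem_map.mpr fun _ _ => rfl) s

theorem isPlanFrom_resetPhase {s : PCVar ν k → Bool} (hs : ∀ i, s (.cleanup (c i)) = true) :
    isPlanFrom (resetPhase c) s (runPlan (resetPhase c) s) := by
  refine isPlanFrom_runPlan
    (List.forall_mem_map.mpr fun d _ => validIn_of_pre_eq rfl (hs d.fst)) ?_
  simp only [resetPhase, List.forall_mem_map]
  intro d _ d' _ v hv
  simp_all [act5]

variable {part c}

theorem mem_PCActions_of_mem_cliquePlan {adj : ν → ν → Prop} (hc : ∀ i, part (c i) = i)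
    (hclique : ∀ i j, i ≠ j → adj (c i) (c j)) :
    ∀ a ∈ cliquePlan part c, a ∈ PCActions adj part := by
  have hne (d : (⊤ : SimpleGraph (Fin k)).Dart) : d.snd ≠ part (c d.fst) := by
    rw [hc]; exact d.adj.symm
  simp only [cliquePlan, edgePhase, vertPhase, checkPhase, cleanupPhase, resetPhase,
    List.mem_append, List.mem_map, Finset.mem_toList, Finset.mem_univ, true_and]
  rintro a ((((⟨e, he, rfl⟩ | ⟨d, rfl⟩) | ⟨d, rfl⟩) | ⟨i, -, rfl⟩) | ⟨d, rfl⟩)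
  · induction e using Sym2.ind with
    | h i j => exact Or.inl ⟨c i, c j, hclique i j (by simpa using he), edgeAct_mk (c i) (c j)⟩
  · exact Or.inr <| Or.inl ⟨_, _, hclique _ _ d.adj, rfl⟩
  · exact Or.inr <| Or.inr <| Or.inl ⟨_, _, hne d, rfl⟩
  · exact Or.inr <| Or.inr <| Or.inr <| Or.inl ⟨_, rfl⟩
  · exact Or.inr <| Or.inr <| Or.inr <| Or.inr ⟨_, _, hne d, rfl⟩

theorem isPlanFrom_cliquePlan (hc : ∀ i, part (c i) = i) (s : PCVar ν k → Bool) :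
    isPlanFrom (cliquePlan part c) s (runPlan (cliquePlan part c) s) := by
  set s₁ := runPlan (edgePhase c) s
  set s₂ := runPlan (vertPhase part c) s₁
  set s₃ := runPlan (checkPhase part c) s₂
  have h₁ := isPlanFrom_edgePhase c s
  have h₂ := isPlanFrom_vertPhase part c (runPlan_edgePhase_edge c s)
  have h₃ := isPlanFrom_checkPhase part c (runPlan_vertPhase_vert part c hc s₁)
  have h₄ := isPlanFrom_cleanupPhase c s₃
  have h₅ := isPlanFrom_resetPhase c (runPlan_cleanupPhase_cleanup c s₃)
  simpa only [cliquePlan, runPlan_append] using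
    isPlanFrom_append (isPlanFrom_append (isPlanFrom_append (isPlanFrom_append h₁ h₂) h₃) h₄) h₅

theorem runPlan_cliquePlan_check (hc : ∀ i, part (c i) = i) (s : PCVar ν k → Bool)
    {i j : Fin k} (hij : i ≠ j) : runPlan (cliquePlan part c) s (.check i j) = true := by
  refine runPlan_apply_of_mem (a := act3 part (c i) j) ?_ (by simp [act3, hc]) ?_ s
  · simp only [cliquePlan, checkPhase, List.mem_append, List.mem_map]
    exact Or.inl <| Or.inl <| Or.inr ⟨⟨(i, j), hij⟩, by simp, rfl⟩
  · simp only [cliquePlan, edgePhase, vertPhase, checkPhase, cleanupPhase, resetPhase,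
      List.mem_append, List.mem_map]
    rintro a ((((⟨e, -, rfl⟩ | ⟨d, -, rfl⟩) | ⟨d, -, rfl⟩) | ⟨i, -, rfl⟩) | ⟨d, -, rfl⟩)
    · induction e using Sym2.ind
      simp [edgeAct_mk, act1]
    · simp [act2]
    · exact ite_eq_none_or_eq_some _ _
    · simp [act4]
    · simp [act5]

theorem runPlan_cliquePlan_vert (s : PCVar ν k → Bool) {i j : Fin k} (hij : i ≠ j) :
    runPlan (cliquePlan part c) s (.vert (c i) j) = false := by
  rw [cliquePlan, runPlan_append]
  exact runPlan_apply_of_mem (a := act5 (c i) j)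
    (List.mem_map.mpr ⟨⟨(i, j), hij⟩, by simp, rfl⟩) (if_pos rfl)
    (List.forall_mem_map.mpr fun _ _ => ite_eq_none_or_eq_some _ _) _

theorem runPlan_cliquePlan_vert_of_forall_ne (s : PCVar ν k → Bool) {u : ν}
    (hu : ∀ i, u ≠ c i) (j : Fin k) :
    runPlan (cliquePlan part c) s (.vert u j) = s (.vert u j) := by
  refine runPlan_apply_of_forall_eff_eq_none ?_ s
  simp only [cliquePlan, edgePhase, vertPhase, checkPhase, cleanupPhase, resetPhase,
    List.mem_append, List.mem_map]
  rintro a ((((⟨e, -, rfl⟩ | ⟨d, -, rfl⟩) | ⟨d, -, rfl⟩) | ⟨i, -, rfl⟩) | ⟨d, -, rfl⟩)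
  · induction e using Sym2.ind
    simp [edgeAct_mk, act1]
  all_goals simp [act2, act3, act4, act5, hu]

theorem satisfies_runPlan_cliquePlan (hc : ∀ i, part (c i) = i) :
    satisfies (PCGoal part) (runPlan (cliquePlan part c) (fun _ => false)) := by
  intro v x hv
  cases v with
  | edge e => simp [PCGoal] at hv
  | cleanup u => simp [PCGoal] at hv
  | check i j =>
    obtain ⟨hij, rfl⟩ : i ≠ j ∧ true = x := by simpa [PCGoal] using hv
    exact runPlan_cliquePlan_check hc _ hij
  | vert u j =>
    obtain ⟨hj, rfl⟩ : j ≠ part u ∧ false = x := by simpa [PCGoal] using hv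
    by_cases hu : ∃ i, u = c i
    · obtain ⟨i, rfl⟩ := hu
      exact runPlan_cliquePlan_vert _ (hc i ▸ hj).symm
    · push Not at hu
      exact runPlan_cliquePlan_vert_of_forall_ne _ hu j

end Reduction

theorem clique_gives_plan_general {ν : Type} [DecidableEq ν] {k : ℕ}
    (adj : ν → ν → Prop) (part : ν → Fin k)
    (c : Fin k → ν) (hc : ∀ i, part (c i) = i)
    (hclique : ∀ i j, i ≠ j → adj (c i) (c j)) :
    ∃ π : List (SASAction (PCVar ν k) Bool),
      (∀ a ∈ π, a ∈ PCActions adj part) ∧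
      π.length = k + 7 * Nat.choose k 2 ∧
      ∃ t, isPlanFrom π (fun _ => false) t ∧ satisfies (PCGoal part) t :=
  ⟨cliquePlan part c, mem_PCActions_of_mem_cliquePlan hc hclique, length_cliquePlan part c, _,
    isPlanFrom_cliquePlan hc _, satisfies_runPlan_cliquePlan hc⟩

theorem clique_gives_plan {ν : Type} [DecidableEq ν] {k : ℕ}
    (adj : ν → ν → Prop) (part : ν → Fin k)
    (hsym : ∀ u w, adj u w → adj w u)
    (hpart : ∀ u w, adj u w → part u ≠ part w)
    (c : Fin k → ν) (hc : ∀ i, part (c i) = i)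
    (hclique : ∀ i j, i ≠ j → adj (c i) (c j)) :
    ∃ π : List (SASAction (PCVar ν k) Bool),
      (∀ a ∈ π, a ∈ PCActions adj part) ∧
      π.length = k + 7 * Nat.choose k 2 ∧
      ∃ t, isPlanFrom π (fun _ => false) t ∧ satisfies (PCGoal part) t :=
  clique_gives_plan_general adj part c hc hclique
end

section
/- In the partitioned-clique reduction, any plan for the constructed instance must, for each ordered pair (i,j) with i ≠ j, contain at least one action of type a^v_j (group 3) with v ∈ V_i, and each such action requires an earlier action of type a^e_i (group 2) with e incident to v, which in turn requires an earlier action a^e (group 1); hence any plan contains at least 2·(k choose 2) group-3 actions set up by appropriate earlier actions. -/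
section Plans

variable {V D : Type} {π : List (SASAction V D)} {s t : V → D} {v : V} {b : D}

theorem exists_getElem?_eff_of_runPlan (hrun : runPlan π s v = b) (hs : s v ≠ b) :
    ∃ m : ℕ, ∃ a : SASAction V D, π[m]? = some a ∧ a.eff v = some b := by
  induction π generalizing s with
  | nil => exact absurd hrun hs
  | cons c π ih =>
    by_cases hc : applyAct c s v = b
    · refine ⟨0, c, rfl, ?_⟩
      cases he : c.eff v with
      | none => simp only [applyAct, he, Option.getD_none] at hc; exact absurd hc hs
      | some d => simpa only [applyAct, he, Option.getD_some] using congrArg some hc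
    · obtain ⟨m, a, hm, ha⟩ := ih hrun hc
      exact ⟨m + 1, a, hm, ha⟩

theorem exists_lt_eff_of_runPlan_take {m : ℕ} (hrun : runPlan (π.take m) s v = b)
    (hs : s v ≠ b) : ∃ q < m, ∃ a : SASAction V D, π[q]? = some a ∧ a.eff v = some b := by
  obtain ⟨q, a, hq, ha⟩ := exists_getElem?_eff_of_runPlan hrun hs
  rw [List.getElem?_take] at hq
  split_ifs at hq with hqm
  exact ⟨q, hqm, a, hq, ha⟩

theorem isPlanFrom.eq_runPlan (h : isPlanFrom π s t) : t = runPlan π s := by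
  induction π generalizing s with
  | nil => exact h
  | cons a π ih => exact ih h.2

theorem isPlanFrom.validIn_getElem? (h : isPlanFrom π s t) {m : ℕ} {a : SASAction V D}
    (ha : π[m]? = some a) : validIn a (runPlan (π.take m) s) := by
  induction π generalizing s m with
  | nil => simp at ha
  | cons c π ih =>
    cases m with
    | zero => cases ha; exact h.1
    | succ m => exact ih h.2 ha

theorem isPlanFrom.exists_lt_eff_of_pre (h : isPlanFrom π s t) {m : ℕ} {a : SASAction V D}
    (ha : π[m]? = some a) (hpre : a.pre v = some b) (hs : s v ≠ b) :
    ∃ q < m, ∃ a', π[q]? = some a' ∧ a'.eff v = some b :=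
  exists_lt_eff_of_runPlan_take (h.validIn_getElem? ha v b hpre) hs

end Plans

section PartitionedClique

variable {ν : Type} [DecidableEq ν] {k : ℕ} {adj : ν → ν → Prop} {part : ν → Fin k}
  {a : SASAction (PCVar ν k) Bool}

theorem eq_act3_of_eff_check (ha : a ∈ PCActions adj part) {i j : Fin k}
    (h : a.eff (.check i j) = some true) : ∃ v, part v = i ∧ a = act3 part v j := by
  rcases ha with ⟨u, w, -, rfl⟩ | ⟨u, w, -, rfl⟩ | ⟨v, j', -, rfl⟩ | ⟨v, rfl⟩ | ⟨v, j', -, rfl⟩ <;>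
    simp only [act1, act2, act3, act4, act5, reduceCtorEq, if_false,
      Option.ite_none_right_eq_some, PCVar.check.injEq, and_true] at h
  obtain ⟨rfl, rfl⟩ := h
  exact ⟨v, rfl, rfl⟩

theorem eq_act2_of_eff_vert (ha : a ∈ PCActions adj part) {v : ν} {j : Fin k}
    (h : a.eff (.vert v j) = some true) : ∃ w, adj v w ∧ part w = j ∧ a = act2 part v w := by
  rcases ha with ⟨u, w, -, rfl⟩ | ⟨u, w, huw, rfl⟩ | ⟨v, j', -, rfl⟩ | ⟨v, rfl⟩ | ⟨v, j', -, rfl⟩ <;>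
    simp only [act1, act2, act3, act4, act5, reduceCtorEq, if_false,
      Option.ite_none_right_eq_some, PCVar.vert.injEq, Option.some_inj, Bool.false_eq_true,
      and_true, and_false] at h
  obtain ⟨rfl, rfl⟩ := h
  exact ⟨w, huw, rfl, rfl⟩

theorem eq_act1_of_eff_edge (ha : a ∈ PCActions adj part) {v w : ν}
    (h : a.eff (.edge s(v, w)) = some true) : a = act1 v w := by
  rcases ha with ⟨u, u', -, rfl⟩ | ⟨u, u', -, rfl⟩ | ⟨v, j, -, rfl⟩ | ⟨v, rfl⟩ | ⟨v, j, -, rfl⟩ <;>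
    simp only [act1, act2, act3, act4, act5, reduceCtorEq, if_false,
      Option.ite_none_right_eq_some, PCVar.edge.injEq, and_true] at h
  rw [act1, act1, h]

theorem act3_injective {v v' : ν} {j j' : Fin k} (h : act3 part v j = act3 part v' j') :
    v = v' ∧ j = j' := by
  simpa [act3] using congrFun (congrArg SASAction.pre h) (.vert v j)

theorem exists_act3_setup {π : List (SASAction (PCVar ν k) Bool)}
    (hπ : ∀ a ∈ π, a ∈ PCActions adj part) {t : PCVar ν k → Bool}
    (hplan : isPlanFrom π (fun _ => false) t) (hgoal : satisfies (PCGoal part) t)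
    {i j : Fin k} (hij : i ≠ j) :
    ∃ m : ℕ, ∃ v : ν, part v = i ∧ π[m]? = some (act3 part v j) ∧
      ∃ q < m, ∃ w : ν, adj v w ∧ part w = j ∧ π[q]? = some (act2 part v w) ∧
        ∃ r < q, π[r]? = some (act1 v w) := by
  have hcheck : runPlan π (fun _ => false) (.check i j) = true :=
    hplan.eq_runPlan ▸ hgoal _ _ (by simp [PCGoal, hij])
  obtain ⟨m, a, hm, ha⟩ := exists_getElem?_eff_of_runPlan hcheck Bool.false_ne_true
  obtain ⟨v, rfl, rfl⟩ := eq_act3_of_eff_check (hπ a (List.mem_of_getElem? hm)) ha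
  obtain ⟨q, hqm, b, hq, hb⟩ :=
    hplan.exists_lt_eff_of_pre hm (v := .vert v j) (by simp [act3]) Bool.false_ne_true
  obtain ⟨w, hvw, rfl, rfl⟩ := eq_act2_of_eff_vert (hπ b (List.mem_of_getElem? hq)) hb
  obtain ⟨r, hrq, c, hr, hc⟩ :=
    hplan.exists_lt_eff_of_pre hq (v := .edge s(v, w)) (by simp [act2]) Bool.false_ne_true
  rw [eq_act1_of_eff_edge (hπ c (List.mem_of_getElem? hr)) hc] at hr
  exact ⟨m, v, rfl, hm, q, hqm, w, hvw, rfl, hq, r, hrq, hr⟩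

end PartitionedClique

theorem plan_contains_group3_setups_general {ν : Type} [DecidableEq ν] {k : ℕ}
    (adj : ν → ν → Prop) (part : ν → Fin k)
    (π : List (SASAction (PCVar ν k) Bool))
    (hπ : ∀ a ∈ π, a ∈ PCActions adj part)
    (t : PCVar ν k → Bool)
    (hplan : isPlanFrom π (fun _ => false) t)
    (hgoal : satisfies (PCGoal part) t) :
    ∃ idx : Fin k × Fin k → ℕ,
      (∀ i j : Fin k, i ≠ j →
        ∃ v : ν, part v = i ∧ π[idx (i, j)]? = some (act3 part v j) ∧
          ∃ q < idx (i, j), ∃ w : ν, adj v w ∧ part w = j ∧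
            π[q]? = some (act2 part v w) ∧
            ∃ r < q, π[r]? = some (act1 v w)) ∧
      (∀ p q : Fin k × Fin k, p.1 ≠ p.2 → q.1 ≠ q.2 → idx p = idx q → p = q) := by
  choose! idx hidx using fun (p : Fin k × Fin k) (hp : p.1 ≠ p.2) =>
    exists_act3_setup hπ hplan hgoal hp
  refine ⟨idx, fun i j hij => hidx (i, j) hij, fun p q hp hq hpq => ?_⟩
  obtain ⟨v, hvp, hv, -⟩ := hidx p hp
  obtain ⟨w, hwq, hw, -⟩ := hidx q hq
  rw [hpq, hw, Option.some_inj] at hv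
  obtain ⟨rfl, hj⟩ := act3_injective hv
  exact Prod.ext (hvp.symm.trans hwq) hj.symm

theorem plan_contains_group3_setups {ν : Type} [DecidableEq ν] {k : ℕ}
    (adj : ν → ν → Prop) (part : ν → Fin k)
    (hsym : ∀ u w, adj u w → adj w u)
    (hpart : ∀ u w, adj u w → part u ≠ part w)
    (π : List (SASAction (PCVar ν k) Bool))
    (hπ : ∀ a ∈ π, a ∈ PCActions adj part)
    (t : PCVar ν k → Bool)
    (hplan : isPlanFrom π (fun _ => false) t)
    (hgoal : satisfies (PCGoal part) t) :
    ∃ idx : Fin k × Fin k → ℕ,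
      (∀ i j : Fin k, i ≠ j →
        ∃ v : ν, part v = i ∧ π[idx (i, j)]? = some (act3 part v j) ∧
          ∃ q < idx (i, j), ∃ w : ν, adj v w ∧ part w = j ∧
            π[q]? = some (act2 part v w) ∧
            ∃ r < q, π[r]? = some (act1 v w)) ∧
      (∀ p q : Fin k × Fin k, p.1 ≠ p.2 → q.1 ≠ q.2 → idx p = idx q → p = q) :=
  plan_contains_group3_setups_general adj part π hπ t hplan hgoal
end
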